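/- For all real numbers x, y with 0 ≤ x ≤ 1/2 and 0 ≤ y ≤ 1/2 and x ≠ y, |x·log x − y·log y| ≤ |x − y| · log(1/|x − y|), where 0·log 0 is interpreted as 0. -/

import Mathlib

/-!
Write `0 ≤ x < y ≤ 1/2` and `t = y - x`. Since `log` is monotone, `x log x + t log t ≤ y log y`,
which is one half of the bound. For the other half, the tangent line of the convex function
`s log s` at `y` gives `y log y - x log x ≤ t (log y + 1)`, and `log y + 1 ≤ 1 - log 2 ≤ log 2 ≤ -log t`
because `log 2 > 1/2`.
-/

open Real

namespace Real

lemma mul_log_add_mul_log_le {a b : ℝ} (ha : 0 ≤ a) (hb : 0 ≤ b) :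
    a * log a + b * log b ≤ (a + b) * log (a + b) := by
  have mul_log_le (c : ℝ) (hc : 0 ≤ c) (hcd : c ≤ a + b) : c * log c ≤ c * log (a + b) := by
    rcases hc.eq_or_lt with rfl | hc
    · simp
    · exact mul_le_mul_of_nonneg_left (log_le_log hc hcd) hc.le
  calc a * log a + b * log b ≤ a * log (a + b) + b * log (a + b) :=
        add_le_add (mul_log_le a ha (by linarith)) (mul_log_le b hb (by linarith))
    _ = (a + b) * log (a + b) := by ring

lemma mul_log_sub_mul_log_le {x y : ℝ} (hx : 0 ≤ x) (hy : 0 < y) :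
    y * log y - x * log x ≤ (y - x) * (log y + 1) := by
  rcases hx.eq_or_lt with rfl | hx
  · simp only [zero_mul, sub_zero]
    linarith
  have log_ratio : x * (log y - log x) ≤ y - x := by
    have key := mul_le_mul_of_nonneg_left (log_le_sub_one_of_pos (div_pos hy hx)) hx.le
    rwa [log_div hy.ne' hx.ne', mul_sub_one, mul_div_cancel₀ _ hx.ne'] at key
  linarith

lemma log_add_one_le_neg_log {t y : ℝ} (ht : 0 < t) (ht_half : t ≤ 1 / 2) (hy : 0 < y)
    (hy_half : y ≤ 1 / 2) : log y + 1 ≤ -log t := by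
  have hlog_half : log (1 / 2) = -log 2 := by rw [one_div, log_inv]
  have hy_log : log y ≤ -log 2 := hlog_half ▸ log_le_log hy hy_half
  have ht_log : log t ≤ -log 2 := hlog_half ▸ log_le_log ht ht_half
  linarith [log_two_gt_d9]

end Real

theorem xlogx_continuity_bound (x y : ℝ)
    (hx0 : 0 ≤ x) (hx1 : x ≤ 1/2) (hy0 : 0 ≤ y) (hy1 : y ≤ 1/2) (hxy : x ≠ y) :
    |x * Real.log x - y * Real.log y| ≤ |x - y| * Real.log (1 / |x - y|) := by
  wlog hlt : x < y generalizing x y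
  · rw [abs_sub_comm, abs_sub_comm x]
    exact this y x hy0 hy1 hx0 hx1 hxy.symm (lt_of_le_of_ne (not_lt.1 hlt) hxy.symm)
  set t := y - x with ht_def
  have ht : 0 < t := sub_pos.2 hlt
  have hy : 0 < y := hx0.trans_lt hlt
  rw [abs_sub_comm x y, abs_of_pos ht, one_div, log_inv, abs_le]
  constructor
  · have tangent := mul_log_sub_mul_log_le hx0 hy
    have slope := mul_le_mul_of_nonneg_left
      (log_add_one_le_neg_log ht (by linarith) hy hy1) ht.le
    linarith
  · have superadd := mul_log_add_mul_log_le hx0 ht.le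
    rw [ht_def, add_sub_cancel] at superadd
    linarith
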